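/- arXiv:2012.14992 — 2 statements merged into one kernel-verified Lean document; each statement's English description precedes it below -/
import Mathlib

section
/- Let r ≥ 2, let F_1, …, F_n be matchings of size n in an r-uniform hypergraph, and let q be the maximum size of a rainbow matching. Then (2n − q(2r−1))(n − q) ≤ rq. -/
/-!
Let `S` be the vertex set of a maximum rainbow matching `(c j)_{j ∈ I}`, so `|S| = rq`. By
maximality every edge of an unused matching `F i` meets `S`, and since its `n` edges are disjoint,
at least `2n - rq` of them meet `S` in a single vertex. Sort these edges by the edge `c j`
containing that vertex. A class has at most `r` edges, and two edges of the same class `j` coming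
from different unused matchings must intersect: otherwise they could replace `c j` and give a
larger rainbow matching. A pigeonhole argument on the tails `e \ S` then shows that for each `j`
at most `r` unused matchings have a class of the full size `r`. Double counting the pairs
`(i, j)` gives `(n - q)(2n - rq) ≤ q((r - 1)(n - q) + r)`, which rearranges to the claim.
-/

open Finset

section

variable {V ι : Type*}

section

variable [DecidableEq V]

theorem sum_card_inter_le_of_pairwiseDisjoint {A : Finset (Finset V)}
    (hA : (A : Set (Finset V)).PairwiseDisjoint id) (T : Finset V) :
    ∑ a ∈ A, (a ∩ T).card ≤ T.card := by
  rw [← card_biUnion (t := (· ∩ T)) (hA.mono_on fun a _ => inter_subset_left)]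
  exact card_le_card (biUnion_subset.2 fun a _ => inter_subset_right)

theorem card_le_of_pairwiseDisjoint_of_inter_nonempty {A : Finset (Finset V)}
    (hA : (A : Set (Finset V)).PairwiseDisjoint id) {T : Finset V}
    (hmeet : ∀ a ∈ A, (a ∩ T).Nonempty) : A.card ≤ T.card :=
  calc A.card = ∑ _a ∈ A, 1 := card_eq_sum_ones A
    _ ≤ ∑ a ∈ A, (a ∩ T).card := sum_le_sum fun a ha => (hmeet a ha).card_pos
    _ ≤ T.card := sum_card_inter_le_of_pairwiseDisjoint hA T

theorem exists_mem_of_pairwiseDisjoint_of_card_le {A : Finset (Finset V)}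
    (hA : (A : Set (Finset V)).PairwiseDisjoint id) {T : Finset V}
    (hmeet : ∀ a ∈ A, (a ∩ T).Nonempty) (hcard : T.card ≤ A.card) {w : V} (hw : w ∈ T) :
    ∃ a ∈ A, w ∈ a := by
  by_contra! hwA
  have hmeet' : ∀ a ∈ A, (a ∩ T.erase w).Nonempty := fun a ha => by
    obtain ⟨x, hx⟩ := hmeet a ha
    have hxw : x ≠ w := fun hxw => hwA a ha (hxw ▸ (mem_inter.1 hx).1)
    exact ⟨x, by simp_all⟩
  have := card_le_of_pairwiseDisjoint_of_inter_nonempty hA hmeet'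
  rw [card_erase_of_mem hw] at this
  have := card_pos.2 ⟨w, hw⟩
  omega

theorem mem_of_inter_eq_singleton {e S : Finset V} {v : V} (h : e ∩ S = {v}) : v ∈ e ∧ v ∈ S :=
  mem_inter.1 (h ▸ mem_singleton_self v)

def singlyMeeting (S T : Finset V) (M : Finset (Finset V)) : Finset (Finset V) :=
  M.filter fun e => ∃ v ∈ T, e ∩ S = {v}

theorem card_singlyMeeting_le {M : Finset (Finset V)}
    (hM : (M : Set (Finset V)).PairwiseDisjoint id) (S T : Finset V) :
    (singlyMeeting S T M).card ≤ T.card := by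
  refine card_le_of_pairwiseDisjoint_of_inter_nonempty
    (hM.subset (coe_subset.2 (filter_subset _ M))) fun e he => ?_
  obtain ⟨v, hvT, hv⟩ := (mem_filter.1 he).2
  exact ⟨v, mem_inter.2 ⟨(mem_of_inter_eq_singleton hv).1, hvT⟩⟩

theorem inter_subset_of_mem_singlyMeeting {S T : Finset V} {M : Finset (Finset V)} {e : Finset V}
    (he : e ∈ singlyMeeting S T M) : e ∩ S ⊆ T := by
  obtain ⟨v, hvT, hv⟩ := (mem_filter.1 he).2
  rw [hv]
  exact singleton_subset_iff.2 hvT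

theorem card_singlyMeeting_le_sum {M : Finset (Finset V)} {S T : Finset V} {I : Finset ι}
    {c : ι → Finset V} (hT : T ⊆ I.biUnion c) :
    (singlyMeeting S T M).card ≤ ∑ j ∈ I, (singlyMeeting S (c j) M).card := by
  refine (card_le_card fun e he => ?_).trans card_biUnion_le
  obtain ⟨heM, v, hvT, hv⟩ := mem_filter.1 he
  obtain ⟨j, hj, hvj⟩ := mem_biUnion.1 (hT hvT)
  exact mem_biUnion.2 ⟨j, hj, mem_filter.2 ⟨heM, v, hvj, hv⟩⟩

theorem two_mul_card_le_card_singlyMeeting_add {M : Finset (Finset V)}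
    (hM : (M : Set (Finset V)).PairwiseDisjoint id) {S : Finset V}
    (hmeet : ∀ e ∈ M, (e ∩ S).Nonempty) :
    2 * M.card ≤ (singlyMeeting S S M).card + S.card := by
  have hedge : ∀ e ∈ M, 2 ≤ (e ∩ S).card + if ∃ v ∈ S, e ∩ S = {v} then 1 else 0 := by
    intro e he
    have hpos := (hmeet e he).card_pos
    split_ifs with hsingle
    · omega
    · suffices (e ∩ S).card ≠ 1 by omega
      intro h1
      obtain ⟨v, hv⟩ := card_eq_one.1 h1
      exact hsingle ⟨v, (mem_of_inter_eq_singleton hv).2, hv⟩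
  calc 2 * M.card = ∑ _e ∈ M, 2 := by rw [sum_const, smul_eq_mul, mul_comm]
    _ ≤ ∑ e ∈ M, ((e ∩ S).card + if ∃ v ∈ S, e ∩ S = {v} then 1 else 0) := sum_le_sum hedge
    _ = (singlyMeeting S S M).card + ∑ e ∈ M, (e ∩ S).card := by
      rw [sum_add_distrib, singlyMeeting, card_filter, add_comm]
    _ ≤ (singlyMeeting S S M).card + S.card :=
      Nat.add_le_add_left (sum_card_inter_le_of_pairwiseDisjoint hM S) _

theorem exists_mem_notMem_of_forall_not_disjoint {S e : Finset V} {v : V} (hev : e ∩ S = {v})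
    {M : Finset (Finset V)} (hM : (M : Set (Finset V)).PairwiseDisjoint id)
    (hcard : e.card ≤ M.card) (hmeet : ∀ f ∈ M, ¬Disjoint e f) {w : V} (hw : w ∈ e \ S) :
    ∃ f ∈ M, w ∈ f ∧ v ∉ f := by
  let A := M.filter (v ∉ ·)
  have hA : (A : Set (Finset V)).PairwiseDisjoint id := hM.subset (coe_subset.2 (filter_subset _ M))
  have hmeetA : ∀ f ∈ A, (f ∩ (e \ S)).Nonempty := by
    intro f hf
    obtain ⟨hfM, hvf⟩ := mem_filter.1 hf
    obtain ⟨x, hxe, hxf⟩ := not_disjoint_iff.1 (hmeet f hfM)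
    refine ⟨x, mem_inter.2 ⟨hxf, mem_sdiff.2 ⟨hxe, fun hxS => hvf ?_⟩⟩⟩
    have hx : x ∈ e ∩ S := mem_inter.2 ⟨hxe, hxS⟩
    rw [hev, mem_singleton] at hx
    exact hx ▸ hxf
  have hthrough : (M.filter (v ∈ ·)).card ≤ 1 := card_le_one.2 fun f hf g hg => by
    by_contra hfg
    exact disjoint_left.1 (hM (mem_filter.1 hf).1 (mem_filter.1 hg).1 hfg)
      (mem_filter.1 hf).2 (mem_filter.1 hg).2
  have htail : (e \ S).card + 1 = e.card := by
    have := card_inter_add_card_sdiff e S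
    rw [hev, card_singleton] at this
    omega
  have hsplit : (M.filter (v ∈ ·)).card + A.card = M.card :=
    card_filter_add_card_filter_not _
  obtain ⟨f, hf, hwf⟩ := exists_mem_of_pairwiseDisjoint_of_card_le hA hmeetA (by omega) hw
  exact ⟨f, (mem_filter.1 hf).1, hwf, (mem_filter.1 hf).2⟩

theorem card_le_of_forall_not_disjoint {S T : Finset V} {r : ℕ} (hr : 2 ≤ r) {P : Finset ι}
    {M : ι → Finset (Finset V)} (hM : ∀ i ∈ P, (M i : Set (Finset V)).PairwiseDisjoint id)
    (hsingle : ∀ i ∈ P, ∀ e ∈ M i, ∃ v ∈ T, e ∩ S = {v})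
    (hunif : ∀ i ∈ P, ∀ e ∈ M i, e.card = r) (hfull : ∀ i ∈ P, (M i).card = r)
    (hcross : ∀ i ∈ P, ∀ i' ∈ P, i ≠ i' → ∀ e ∈ M i, ∀ e' ∈ M i', ¬Disjoint e e') :
    P.card ≤ T.card := by
  rcases P.eq_empty_or_nonempty with rfl | ⟨i₀, hi₀⟩
  · simp
  obtain ⟨e₀, he₀⟩ : (M i₀).Nonempty := card_pos.1 (by rw [hfull i₀ hi₀]; omega)
  obtain ⟨v₀, -, hv₀⟩ := hsingle i₀ hi₀ e₀ he₀
  obtain ⟨w, hw⟩ : (e₀ \ S).Nonempty := by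
    have := card_inter_add_card_sdiff e₀ S
    rw [hv₀, card_singleton, hunif i₀ hi₀ e₀ he₀] at this
    exact card_pos.1 (by omega)
  have hother : ∀ i ∈ P, ∀ i' ∈ P, i ≠ i' → ∀ e ∈ M i, w ∈ e → ∀ v, e ∩ S = {v} →
      ∃ e' ∈ M i', w ∈ e' ∧ v ∉ e' := fun i hi i' hi' hii' e he hwe v hv =>
    exists_mem_notMem_of_forall_not_disjoint hv (hM i' hi')
      (by rw [hunif i hi e he, hfull i' hi']) (hcross i hi i' hi' hii' e he)
      (mem_sdiff.2 ⟨hwe, (mem_sdiff.1 hw).2⟩)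
  have hthrough : ∀ i ∈ P, ∃ e ∈ M i, w ∈ e := by
    intro i hi
    by_cases h : i = i₀
    · exact h ▸ ⟨e₀, he₀, (mem_sdiff.1 hw).1⟩
    · obtain ⟨e, he, hwe, -⟩ := hother i₀ hi₀ i hi (Ne.symm h) e₀ he₀ (mem_sdiff.1 hw).1 v₀ hv₀
      exact ⟨e, he, hwe⟩
  choose! G hG hwG using hthrough
  -- the edges `G i` through `w` meet `S` in pairwise distinct vertices of `T`
  refine (card_le_card_of_injOn (fun i => G i ∩ S) (t := T.image ({·})) ?_ ?_).trans
    card_image_le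
  · intro i hi
    obtain ⟨v, hvT, hv⟩ := hsingle i hi (G i) (hG i hi)
    exact mem_image.2 ⟨v, hvT, hv.symm⟩
  · intro i hi i' hi' hGG
    by_contra hii'
    obtain ⟨v, -, hv⟩ := hsingle i hi (G i) (hG i hi)
    obtain ⟨e', he', hwe', hve'⟩ := hother i hi i' hi' hii' (G i) (hG i hi) (hwG i hi) v hv
    have he'G : e' = G i' := by
      by_contra h
      exact disjoint_left.1 (hM i' hi' he' (hG i' hi') h) hwe' (hwG i' hi')
    have hv' : G i' ∩ S = {v} := (show G i ∩ S = G i' ∩ S from hGG) ▸ hv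
    exact hve' (he'G ▸ (mem_of_inter_eq_singleton hv').1)

theorem sum_add_card_le_of_le {s : Finset ι} {f : ι → ℕ} {r : ℕ} (hf : ∀ i ∈ s, f i ≤ r) :
    ∑ i ∈ s, f i + s.card ≤ r * s.card + (s.filter (f · = r)).card :=
  calc ∑ i ∈ s, f i + s.card = ∑ i ∈ s, (f i + 1) := by rw [sum_add_distrib, card_eq_sum_ones]
    _ ≤ ∑ i ∈ s, (r + if f i = r then 1 else 0) := sum_le_sum fun i hi => by
      have := hf i hi
      split_ifs <;> omega
    _ = r * s.card + (s.filter (f · = r)).card := by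
      rw [sum_add_distrib, sum_const, smul_eq_mul, card_filter, mul_comm]

theorem mul_add_mul_le_of_sum_le {s t : Finset ι} {g : ι → ι → ℕ} {a b C : ℕ}
    (hs : ∀ i ∈ s, a ≤ ∑ j ∈ t, g i j + b) (ht : ∀ j ∈ t, ∑ i ∈ s, g i j + s.card ≤ C) :
    s.card * a + t.card * s.card ≤ t.card * C + s.card * b := by
  have hrows : s.card * a ≤ ∑ i ∈ s, ∑ j ∈ t, g i j + s.card * b :=
    calc s.card * a = ∑ _i ∈ s, a := by rw [sum_const, smul_eq_mul]
      _ ≤ ∑ i ∈ s, (∑ j ∈ t, g i j + b) := sum_le_sum hs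
      _ = ∑ i ∈ s, ∑ j ∈ t, g i j + s.card * b := by rw [sum_add_distrib, sum_const, smul_eq_mul]
  have hcols : ∑ j ∈ t, ∑ i ∈ s, g i j + t.card * s.card ≤ t.card * C :=
    calc ∑ j ∈ t, ∑ i ∈ s, g i j + t.card * s.card = ∑ j ∈ t, (∑ i ∈ s, g i j + s.card) := by
          rw [sum_add_distrib, sum_const, smul_eq_mul]
      _ ≤ ∑ _j ∈ t, C := sum_le_sum ht
      _ = t.card * C := by rw [sum_const, smul_eq_mul]
  rw [sum_comm] at hrows
  omega

end

def IsRainbow (F : ι → Finset (Finset V)) (I : Finset ι) (c : ι → Finset V) : Prop :=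
  (∀ i ∈ I, c i ∈ F i) ∧ (I : Set ι).PairwiseDisjoint c

namespace IsRainbow

variable {F : ι → Finset (Finset V)} {I : Finset ι} {c : ι → Finset V}

theorem subset (h : IsRainbow F I c) {J : Finset ι} (hJ : J ⊆ I) : IsRainbow F J c :=
  ⟨fun i hi => h.1 i (hJ hi), h.2.subset (coe_subset.2 hJ)⟩

theorem insert_of_disjoint [DecidableEq ι] (h : IsRainbow F I c) {i : ι} (hi : i ∉ I) {e : Finset V}
    (he : e ∈ F i) (hdisj : ∀ k ∈ I, Disjoint e (c k)) :
    IsRainbow F (insert i I) (Function.update c i e) := by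
  have hupdate : ∀ k ∈ I, Function.update c i e k = c k := fun k hk =>
    Function.update_of_ne (ne_of_mem_of_not_mem hk hi) e c
  refine ⟨fun k hk => ?_, ?_⟩
  · rcases mem_insert.1 hk with rfl | hk
    · rwa [Function.update_self]
    · rw [hupdate k hk]
      exact h.1 k hk
  · rw [coe_insert]
    refine (h.2.mono_on fun k hk => (hupdate k hk).le).insert_of_notMem hi fun k hk => ?_
    rw [Function.update_self, hupdate k hk]
    exact hdisj k hk

variable [DecidableEq V]

theorem inter_biUnion_nonempty [DecidableEq ι] (h : IsRainbow F I c)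
    (hmax : ∀ J d, IsRainbow F J d → J.card ≤ I.card) {i : ι} (hi : i ∉ I) {e : Finset V}
    (he : e ∈ F i) : (e ∩ I.biUnion c).Nonempty := by
  by_contra hempty
  rw [not_nonempty_iff_eq_empty, ← disjoint_iff_inter_eq_empty, disjoint_biUnion_right] at hempty
  have := hmax _ _ (h.insert_of_disjoint hi he hempty)
  rw [card_insert_of_notMem hi] at this
  omega

/-- Otherwise `e₁` and `e₂` could replace `c j` in a larger rainbow matching. -/
theorem not_disjoint [DecidableEq ι] (h : IsRainbow F I c)
    (hmax : ∀ J d, IsRainbow F J d → J.card ≤ I.card) {j i₁ i₂ : ι} (hj : j ∈ I) (hi₁ : i₁ ∉ I)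
    (hi₂ : i₂ ∉ I) (hi₁₂ : i₁ ≠ i₂) {e₁ e₂ : Finset V} (he₁ : e₁ ∈ F i₁) (he₂ : e₂ ∈ F i₂)
    (he₁j : e₁ ∩ I.biUnion c ⊆ c j) (he₂j : e₂ ∩ I.biUnion c ⊆ c j) : ¬Disjoint e₁ e₂ := by
  intro h₁₂
  have hrest : ∀ e, e ∩ I.biUnion c ⊆ c j → ∀ k ∈ I.erase j, Disjoint e (c k) := by
    intro e hej k hk
    refine disjoint_left.2 fun x hxe hxk => ?_
    have hxj : x ∈ c j := hej (mem_inter.2 ⟨hxe, mem_biUnion.2 ⟨k, mem_of_mem_erase hk, hxk⟩⟩)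
    exact disjoint_left.1 (h.2 (mem_of_mem_erase hk) hj (ne_of_mem_erase hk)) hxk hxj
  have hi₁' : i₁ ∉ I.erase j := fun hi => hi₁ (mem_of_mem_erase hi)
  have hi₂' : i₂ ∉ insert i₁ (I.erase j) := by
    simpa [hi₁₂.symm] using fun hi : i₂ ∈ I.erase j => hi₂ (mem_of_mem_erase hi)
  have h₁ := (h.subset (erase_subset j I)).insert_of_disjoint hi₁' he₁ (hrest e₁ he₁j)
  have h₂ := h₁.insert_of_disjoint hi₂' he₂ fun k hk => by
    rcases mem_insert.1 hk with rfl | hk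
    · rw [Function.update_self]
      exact h₁₂.symm
    · rw [Function.update_of_ne (ne_of_mem_of_not_mem hk hi₁')]
      exact hrest e₂ he₂j k hk
  have := hmax _ _ h₂
  rw [card_insert_of_notMem hi₂', card_insert_of_notMem hi₁', card_erase_of_mem hj] at this
  have := card_pos.2 ⟨j, hj⟩
  omega

theorem card_biUnion_eq {r : ℕ} (h : IsRainbow F I c) (hunif : ∀ i, ∀ e ∈ F i, e.card = r) :
    (I.biUnion c).card = r * I.card := by
  rw [card_biUnion h.2, sum_congr rfl fun j hj => hunif j _ (h.1 j hj), sum_const, smul_eq_mul,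
    mul_comm]

theorem two_mul_card_le_sum_card_singlyMeeting [DecidableEq ι] {r : ℕ}
    (hF : ∀ i, (F i : Set (Finset V)).PairwiseDisjoint id) (hunif : ∀ i, ∀ e ∈ F i, e.card = r)
    (h : IsRainbow F I c) (hmax : ∀ J d, IsRainbow F J d → J.card ≤ I.card) {i : ι}
    (hi : i ∉ I) :
    2 * (F i).card ≤ ∑ j ∈ I, (singlyMeeting (I.biUnion c) (c j) (F i)).card + r * I.card := by
  rw [← h.card_biUnion_eq hunif]
  exact (two_mul_card_le_card_singlyMeeting_add (hF i) fun e he =>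
    h.inter_biUnion_nonempty hmax hi he).trans
    (Nat.add_le_add_right (card_singlyMeeting_le_sum subset_rfl) _)

theorem sum_card_singlyMeeting_add_card_le [DecidableEq ι] {r : ℕ} (hr : 2 ≤ r)
    (hF : ∀ i, (F i : Set (Finset V)).PairwiseDisjoint id) (hunif : ∀ i, ∀ e ∈ F i, e.card = r)
    (h : IsRainbow F I c) (hmax : ∀ J d, IsRainbow F J d → J.card ≤ I.card) {j : ι}
    (hj : j ∈ I) {s : Finset ι} (hs : Disjoint s I) :
    ∑ i ∈ s, (singlyMeeting (I.biUnion c) (c j) (F i)).card + s.card ≤ r * s.card + r := by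
  have hcj : (c j).card = r := hunif j _ (h.1 j hj)
  refine (sum_add_card_le_of_le fun i _ => hcj ▸ card_singlyMeeting_le (hF i) _ _).trans
    (Nat.add_le_add_left ?_ _)
  rw [← hcj]
  refine card_le_of_forall_not_disjoint hr
    (fun i _ => (hF i).subset (coe_subset.2 (filter_subset _ _)))
    (fun i _ e he => (mem_filter.1 he).2) (fun i _ e he => hunif i e (mem_filter.1 he).1)
    (fun i hi => hcj ▸ (mem_filter.1 hi).2) ?_
  intro i hi i' hi' hii' e he e' he'
  exact h.not_disjoint hmax hj (disjoint_left.1 hs (mem_filter.1 hi).1)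
    (disjoint_left.1 hs (mem_filter.1 hi').1) hii' (mem_filter.1 he).1 (mem_filter.1 he').1
    (inter_subset_of_mem_singlyMeeting he) (inter_subset_of_mem_singlyMeeting he')

end IsRainbow

end

/-- Let `r ≥ 2`, let `F₁, …, Fₙ` be matchings of size `n` in an
`r`-uniform hypergraph, and let `q` be the maximum size of a rainbow matching (realized
by indices `I` and choice `c`, so `q = |I|`). Then `(2n - q(2r-1))(n - q) ≤ rq`. -/
theorem stmt_9 {V : Type*} [DecidableEq V] (r n : ℕ) (hr : 2 ≤ r)
    (E : Set (Finset V)) (hunifE : ∀ e ∈ E, e.card = r)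
    (F : Fin n → Finset (Finset V))
    (hedges : ∀ i, ∀ e ∈ F i, e ∈ E)
    (hmatch : ∀ i, ∀ e ∈ F i, ∀ f ∈ F i, e ≠ f → Disjoint e f)
    (hsize : ∀ i, (F i).card = n)
    (I : Finset (Fin n)) (c : Fin n → Finset V)
    (hc : ∀ i ∈ I, c i ∈ F i)
    (hdisj : ∀ i ∈ I, ∀ j ∈ I, i ≠ j → Disjoint (c i) (c j))
    (hmax : ∀ (J : Finset (Fin n)) (d : Fin n → Finset V),
      (∀ i ∈ J, d i ∈ F i) →
      (∀ i ∈ J, ∀ j ∈ J, i ≠ j → Disjoint (d i) (d j)) →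
      J.card ≤ I.card) :
    (2 * (n : ℝ) - (I.card : ℝ) * (2 * (r : ℝ) - 1)) * ((n : ℝ) - (I.card : ℝ)) ≤
      (r : ℝ) * (I.card : ℝ) := by
  have hF : ∀ i, (F i : Set (Finset V)).PairwiseDisjoint id := fun i e he f hf hef =>
    hmatch i e he f hf hef
  have hunif : ∀ i, ∀ e ∈ F i, e.card = r := fun i e he => hunifE e (hedges i e he)
  have hI : IsRainbow F I c := ⟨hc, fun i hi j hj hij => hdisj i hi j hj hij⟩
  have hImax : ∀ J d, IsRainbow F J d → J.card ≤ I.card := fun J d hJ =>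
    hmax J d hJ.1 fun i hi j hj hij => hJ.2 hi hj hij
  have hcount := mul_add_mul_le_of_sum_le (s := Iᶜ) (t := I)
    (fun i hi => hsize i ▸ hI.two_mul_card_le_sum_card_singlyMeeting hF hunif hImax
      (mem_compl.1 hi))
    (fun j hj => hI.sum_card_singlyMeeting_add_card_le hr hF hunif hImax hj disjoint_compl_left)
  have hn : (n : ℝ) = Iᶜ.card + I.card := by
    rw [← Nat.cast_add, card_compl_add_card, Fintype.card_fin]
  have hcountR : ((Iᶜ.card * (2 * n) + I.card * Iᶜ.card : ℕ) : ℝ) ≤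
      ((I.card * (r * Iᶜ.card + r) + Iᶜ.card * (r * I.card) : ℕ) : ℝ) := by
    exact_mod_cast hcount
  push_cast at hcountR
  rw [hn] at hcountR ⊢
  linear_combination hcountR
end

section
/- Let G be a triangle-free graph, let F_1, …, F_n be matchings of size n in G, and let R be a rainbow matching of maximum size. Then for every edge e ∈ R, there is at most one unrepresented matching F_i for which there exist two edges of F_i each intersecting e and intersecting no other edge of R. -/
/-!
Suppose two unrepresented matchings `F i`, `F j` both have two edges meeting only the edge
`e = xy` of `R`. As `F i` is a matching, one of its two edges passes through `x` and misses `y`,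
say `xa`; likewise `F j` has an edge `yb` missing `x`. Triangle-freeness gives `a ≠ b`, so
replacing `e` in `R` by `xa` and `yb` yields a rainbow matching larger than `R`.
-/

/-- Two graph edges intersect (share a vertex). -/
def Meets {V : Type*} (e f : Sym2 V) : Prop := ∃ v, v ∈ e ∧ v ∈ f

/-- `g` intersects `e` and no other edge of the matching `R`. -/
def MeetsOnly {V : Type*} (R : Finset (Sym2 V)) (g e : Sym2 V) : Prop :=
  Meets g e ∧ ∀ f ∈ R, f ≠ e → ¬ Meets g f

open SimpleGraph

section

variable {V : Type*}

theorem meets_mk_iff {g : Sym2 V} {x y : V} : Meets g s(x, y) ↔ x ∈ g ∨ y ∈ g := by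
  simp [Meets, and_or_left, exists_or]

/-- A rainbow matching of the family `F`: `J` is the set of represented indices and `d i` the
edge chosen from `F i`. -/
def IsRainbowMatching {ι : Type*} (F : ι → Finset (Sym2 V)) (J : Finset ι) (d : ι → Sym2 V) :
    Prop :=
  (∀ i ∈ J, d i ∈ F i) ∧ ∀ i ∈ J, ∀ j ∈ J, i ≠ j → ∀ v, v ∈ d i → v ∉ d j

namespace IsRainbowMatching

variable {ι : Type*} {F : ι → Finset (Sym2 V)} {J : Finset ι} {d : ι → Sym2 V}

theorem mono {J' : Finset ι} (h : IsRainbowMatching F J d) (hJ' : J' ⊆ J) :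
    IsRainbowMatching F J' d :=
  ⟨fun i hi => h.1 i (hJ' hi), fun i hi j hj => h.2 i (hJ' hi) j (hJ' hj)⟩

theorem insert_update [DecidableEq ι] (h : IsRainbowMatching F J d) {i : ι} (hi : i ∉ J)
    {a : Sym2 V} (ha : a ∈ F i) (hdisj : ∀ k ∈ J, ∀ v, v ∈ a → v ∉ d k) :
    IsRainbowMatching F (insert i J) (Function.update d i a) := by
  have hupd : ∀ k ∈ J, Function.update d i a k = d k := fun k hk =>
    Function.update_of_ne (ne_of_mem_of_not_mem hk hi) a d
  refine ⟨fun k hk => ?_, fun k hk l hl hkl v hvk hvl => ?_⟩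
  · rcases Finset.mem_insert.1 hk with rfl | hk
    · simpa using ha
    · simpa [hupd k hk] using h.1 k hk
  rw [Finset.mem_insert] at hk hl
  rcases hk with rfl | hk <;> rcases hl with rfl | hl
  · exact hkl rfl
  · simp only [Function.update_self, hupd l hl] at hvk hvl
    exact hdisj l hl v hvk hvl
  · simp only [Function.update_self, hupd k hk] at hvk hvl
    exact hdisj k hk v hvl hvk
  · rw [hupd k hk] at hvk
    rw [hupd l hl] at hvl
    exact h.2 k hk l hl hkl v hvk hvl

theorem exists_card_lt [DecidableEq ι] (h : IsRainbowMatching F J d) {i₀ i j : ι}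
    (hi₀ : i₀ ∈ J) (hi : i ∉ J) (hj : j ∉ J) (hij : i ≠ j) {a b : Sym2 V}
    (ha : a ∈ F i) (hb : b ∈ F j) (hab : ∀ v, v ∈ a → v ∉ b)
    (haJ : ∀ k ∈ J.erase i₀, ∀ v, v ∈ a → v ∉ d k)
    (hbJ : ∀ k ∈ J.erase i₀, ∀ v, v ∈ b → v ∉ d k) :
    ∃ J' d', IsRainbowMatching F J' d' ∧ J.card < J'.card := by
  have hj' : j ∉ J.erase i₀ := fun hj' => hj (Finset.mem_of_mem_erase hj')
  have hi' : i ∉ insert j (J.erase i₀) := by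
    simpa [hij] using fun _ => hi
  have hJ₁ := (h.mono (Finset.erase_subset i₀ J)).insert_update hj' hb hbJ
  refine ⟨_, _, hJ₁.insert_update hi' ha fun k hk v hva => ?_, ?_⟩
  · rcases Finset.mem_insert.1 hk with rfl | hk
    · simpa using hab v hva
    · rw [Function.update_of_ne (ne_of_mem_of_not_mem hk hj')]
      exact haJ k hk v hva
  · rw [Finset.card_insert_of_notMem hi', Finset.card_insert_of_notMem hj',
      Finset.card_erase_of_mem hi₀]
    have := Finset.card_pos.2 ⟨i₀, hi₀⟩
    omega

theorem notMem_of_meetsOnly [DecidableEq ι] [DecidableEq V] (h : IsRainbowMatching F J d)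
    {i₀ k : ι} (hi₀ : i₀ ∈ J) (hk : k ∈ J.erase i₀) {g : Sym2 V}
    (hg : MeetsOnly (J.image d) g (d i₀)) {v : V} (hv : v ∈ g) : v ∉ d k := by
  have hkJ := Finset.mem_of_mem_erase hk
  have hne : d k ≠ d i₀ := by
    obtain ⟨u, hug, hu⟩ := hg.1
    intro hk₀
    exact h.2 k hkJ i₀ hi₀ (Finset.ne_of_mem_erase hk) u (hk₀ ▸ hu) hu
  exact fun hvk => hg.2 (d k) (Finset.mem_image_of_mem d hkJ) hne ⟨v, hv, hvk⟩

end IsRainbowMatching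

theorem exists_mem_notMem_of_meetsOnly {M R : Finset (Sym2 V)}
    (hM : ∀ e ∈ M, ∀ f ∈ M, e ≠ f → ∀ v, v ∈ e → v ∉ f)
    {g₁ g₂ : Sym2 V} (hg₁ : g₁ ∈ M) (hg₂ : g₂ ∈ M) (hne : g₁ ≠ g₂) {e : Sym2 V} {x y : V}
    (hxy : x ≠ y) (hx : x ∈ e) (hy : y ∈ e) (m₁ : MeetsOnly R g₁ e) (m₂ : MeetsOnly R g₂ e) :
    ∃ g ∈ M, MeetsOnly R g e ∧ x ∈ g ∧ y ∉ g := by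
  obtain rfl := (Sym2.mem_and_mem_iff hxy).1 ⟨hx, hy⟩
  by_cases hx₁ : x ∈ g₁
  · refine ⟨g₁, hg₁, m₁, hx₁, fun hy₁ => ?_⟩
    -- otherwise `g₁ = xy`, which `g₂` meets
    obtain ⟨v, hv₂, hv⟩ := m₂.1
    rw [← (Sym2.mem_and_mem_iff hxy).1 ⟨hx₁, hy₁⟩] at hv
    exact hM g₁ hg₁ g₂ hg₂ hne v hv hv₂
  · have hy₁ : y ∈ g₁ := (meets_mk_iff.1 m₁.1).resolve_left hx₁
    have hy₂ : y ∉ g₂ := hM g₁ hg₁ g₂ hg₂ hne y hy₁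
    exact ⟨g₂, hg₂, m₂, (meets_mk_iff.1 m₂.1).resolve_right hy₂, hy₂⟩

end

theorem stmt_10_general {V : Type*} [DecidableEq V] (G : SimpleGraph V) (n : ℕ)
    (htf : ∀ (v : V) (w : G.Walk v v), w.IsCycle → w.length ≠ 3)
    (F : Fin n → Finset (Sym2 V))
    (hedges : ∀ i, ∀ e ∈ F i, e ∈ G.edgeSet)
    (hmatch : ∀ i, ∀ e ∈ F i, ∀ f ∈ F i, e ≠ f → ∀ v, v ∈ e → v ∉ f)
    (I : Finset (Fin n)) (c : Fin n → Sym2 V)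
    (hc : ∀ i ∈ I, c i ∈ F i)
    (hdisj : ∀ i ∈ I, ∀ j ∈ I, i ≠ j → ∀ v, v ∈ c i → v ∉ c j)
    (hmax : ∀ (J : Finset (Fin n)) (d : Fin n → Sym2 V),
      (∀ i ∈ J, d i ∈ F i) →
      (∀ i ∈ J, ∀ j ∈ J, i ≠ j → ∀ v, v ∈ d i → v ∉ d j) →
      J.card ≤ I.card)
    (e : Sym2 V) (he : e ∈ I.image c) :
    {i : Fin n | i ∉ I ∧ ∃ g₁ ∈ F i, ∃ g₂ ∈ F i, g₁ ≠ g₂ ∧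
      MeetsOnly (I.image c) g₁ e ∧ MeetsOnly (I.image c) g₂ e}.Subsingleton := by
  rintro i ⟨hiI, g₁, hg₁, g₂, hg₂, hg, m₁, m₂⟩ j ⟨hjI, h₁, hh₁, h₂, hh₂, hh, n₁, n₂⟩
  by_contra hij
  have hR : IsRainbowMatching F I c := ⟨hc, hdisj⟩
  obtain ⟨i₀, hi₀, rfl⟩ := Finset.mem_image.1 he
  obtain ⟨x, y, hexy⟩ : ∃ x y, c i₀ = s(x, y) := ⟨_, _, (Quot.out_eq (c i₀)).symm⟩
  have hxy : G.Adj x y := by simpa [hexy] using hedges i₀ _ (hc i₀ hi₀)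
  have hx : x ∈ c i₀ := hexy ▸ Sym2.mem_mk_left x y
  have hy : y ∈ c i₀ := hexy ▸ Sym2.mem_mk_right x y
  obtain ⟨_, hga, mga, hxa, hya⟩ :=
    exists_mem_notMem_of_meetsOnly (hmatch i) hg₁ hg₂ hg hxy.ne hx hy m₁ m₂
  obtain ⟨_, hgb, mgb, hyb, hxb⟩ :=
    exists_mem_notMem_of_meetsOnly (hmatch j) hh₁ hh₂ hh hxy.ne.symm hy hx n₁ n₂
  obtain ⟨a, rfl⟩ := Sym2.mem_iff_exists.1 hxa
  obtain ⟨b, rfl⟩ := Sym2.mem_iff_exists.1 hyb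
  have hab : a ≠ b := by
    rintro rfl
    obtain ⟨u, w, hw, h3⟩ := is3Clique_iff_exists_cycle_length_three.1
      ⟨_, is3Clique_triple_iff.2 ⟨hxy, hedges i _ hga, hedges j _ hgb⟩⟩
    exact htf u w hw h3
  have hdisj_ab : ∀ v, v ∈ s(x, a) → v ∉ s(y, b) := by
    simp only [Sym2.mem_iff] at hya hxb ⊢
    grind
  obtain ⟨J, d, hJ, hlt⟩ := hR.exists_card_lt hi₀ hiI hjI hij hga hgb hdisj_ab
    (fun _ hk _ => hR.notMem_of_meetsOnly hi₀ hk mga)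
    (fun _ hk _ => hR.notMem_of_meetsOnly hi₀ hk mgb)
  exact (hmax J d hJ.1 hJ.2).not_gt hlt

/-- In a triangle-free graph, with `F₁, …, Fₙ` matchings of size `n`
and `R` (given by indices `I` and choice `c`) a maximum-size rainbow matching, for every
`e ∈ R` there is at most one unrepresented matching `Fᵢ` having two edges each
intersecting `e` and no other edge of `R`. -/
theorem stmt_10 {V : Type*} [DecidableEq V] (G : SimpleGraph V) (n : ℕ)
    (htf : ∀ (v : V) (w : G.Walk v v), w.IsCycle → w.length ≠ 3)
    (F : Fin n → Finset (Sym2 V))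
    (hedges : ∀ i, ∀ e ∈ F i, e ∈ G.edgeSet)
    (hmatch : ∀ i, ∀ e ∈ F i, ∀ f ∈ F i, e ≠ f → ∀ v, v ∈ e → v ∉ f)
    (hsize : ∀ i, (F i).card = n)
    (I : Finset (Fin n)) (c : Fin n → Sym2 V)
    (hc : ∀ i ∈ I, c i ∈ F i)
    (hdisj : ∀ i ∈ I, ∀ j ∈ I, i ≠ j → ∀ v, v ∈ c i → v ∉ c j)
    (hmax : ∀ (J : Finset (Fin n)) (d : Fin n → Sym2 V),
      (∀ i ∈ J, d i ∈ F i) →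
      (∀ i ∈ J, ∀ j ∈ J, i ≠ j → ∀ v, v ∈ d i → v ∉ d j) →
      J.card ≤ I.card)
    (e : Sym2 V) (he : e ∈ I.image c) :
    {i : Fin n | i ∉ I ∧ ∃ g₁ ∈ F i, ∃ g₂ ∈ F i, g₁ ≠ g₂ ∧
      MeetsOnly (I.image c) g₁ e ∧ MeetsOnly (I.image c) g₂ e}.Subsingleton :=
  stmt_10_general G n htf F hedges hmatch I c hc hdisj hmax e he
end
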